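/- arXiv:2207.07261 — 5 statements merged into one kernel-verified Lean document; each statement's English description precedes it below -/
import Mathlib

section
/- With the bathymetry limiter α_ij defined piecewise by α_ij = min{1, 2·h̄_ji/(b_j − b_i)} if b_i < b_j, α_ij = 1 if b_i = b_j, and α_ij = min{1, 2·h̄_ij/(b_i − b_j)} if b_i > b_j, where h̄_ij, h̄_ji ≥ 0, the limited bar states h̄_ij^b := h̄_ij + (α_ij/2)(b_j − b_i) and h̄_ji^b := h̄_ji + (α_ij/2)(b_i − b_j) are both nonnegative, and α_ij ∈ [0,1]. -/
/-! The limiter scales the bathymetry jump `b_j - b_i` so that the bar state on the lower side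
loses at most what it has: `α ≤ 2 h / d` means exactly `α d / 2 ≤ h`. The bar state on the higher
side only gains, and for `b_i = b_j` nothing is limited. -/

lemma half_min_one_div_mul_le {h d : ℝ} (hd : 0 < d) : min 1 (2 * h / d) / 2 * d ≤ h := by
  have hle : min 1 (2 * h / d) * d ≤ 2 * h := (le_div_iff₀ hd).mp (min_le_right _ _)
  linarith

lemma limiter_nonneg_bar_states_of_lt {h h' a b : ℝ} (hh : 0 ≤ h) (hh' : 0 ≤ h') (hab : a < b) :
    0 ≤ min 1 (2 * h' / (b - a)) ∧ min 1 (2 * h' / (b - a)) ≤ 1 ∧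
      0 ≤ h + min 1 (2 * h' / (b - a)) / 2 * (b - a) ∧
      0 ≤ h' + min 1 (2 * h' / (b - a)) / 2 * (a - b) := by
  have hd : 0 < b - a := sub_pos.mpr hab
  have hα : 0 ≤ min 1 (2 * h' / (b - a)) := le_min zero_le_one (by positivity)
  refine ⟨hα, min_le_left _ _, by positivity, ?_⟩
  have := half_min_one_div_mul_le (h := h') hd
  linarith

/-- Positivity of the limited bar states produced by the bathymetry limiter
`α_ij`, together with `α_ij ∈ [0,1]`. -/
theorem bathymetry_limiter_positivity (hbarij hbarji bi bj : ℝ)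
    (hij : 0 ≤ hbarij) (hji : 0 ≤ hbarji) (α : ℝ)
    (hα : α = if bi < bj then min 1 (2 * hbarji / (bj - bi))
          else if bi = bj then 1
          else min 1 (2 * hbarij / (bi - bj))) :
    0 ≤ α ∧ α ≤ 1 ∧
      0 ≤ hbarij + (α / 2) * (bj - bi) ∧
      0 ≤ hbarji + (α / 2) * (bi - bj) := by
  rcases lt_trichotomy bi bj with hlt | rfl | hgt
  · rw [if_pos hlt] at hα
    subst hα
    exact limiter_nonneg_bar_states_of_lt hij hji hlt
  · simp only [lt_irrefl, if_false, if_true] at hα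
    subst hα
    simp [hij, hji]
  · rw [if_neg hgt.not_gt, if_neg hgt.ne'] at hα
    subst hα
    obtain ⟨h0, h1, hji', hij'⟩ := limiter_nonneg_bar_states_of_lt hji hij hgt
    exact ⟨h0, h1, hij', hji'⟩
end

section
/- Well-balancedness of the positivity-preserving limiter: for a lake-at-rest state with h_i ≥ 0 for all i, if for a pair of neighboring nodes (i,j) either (i) h_i = h_j = 0, or (ii) h_i + b_i = h_j + b_j, then in case (i) α_ij·(b_j − b_i) = 0, and in case (ii) α_ij = 1; consequently the flux d_ij(h_j − h_i + α_ij(b_j − b_i)) of the limited continuity equation vanishes. -/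
/-! At rest the limited bathymetry term is harmless for two reasons. On a dry edge both bar states
vanish, so the limiter is `0` unless the bottom is flat, and `α_ij (b_j - b_i) = 0` either way.
On a wet edge with flat free surface, `b_j - b_i = h_i - h_j`, whose modulus is at most
`h_i + h_j = 2 h̄`; this is exactly the condition under which the limiter does not cut. -/

/-- `limiter h̄_ij h̄_ji b_i b_j` is the paper's `α_ij`. -/
noncomputable def limiter (hbarIJ hbarJI bi bj : ℝ) : ℝ :=
  if bi < bj then min 1 (2 * hbarJI / (bj - bi))
  else if bi = bj then 1
  else min 1 (2 * hbarIJ / (bi - bj))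

theorem limiter_zero_mul_sub (bi bj : ℝ) : limiter 0 0 bi bj * (bj - bi) = 0 := by
  unfold limiter
  split_ifs <;> simp_all

theorem limiter_eq_one {hbarIJ hbarJI bi bj : ℝ}
    (hJI : bj - bi ≤ 2 * hbarJI) (hIJ : bi - bj ≤ 2 * hbarIJ) :
    limiter hbarIJ hbarJI bi bj = 1 := by
  unfold limiter
  split_ifs with hlt heq
  · exact min_eq_left ((one_le_div₀ (sub_pos.2 hlt)).2 hJI)
  · rfl
  · have hgt : bj < bi := lt_of_le_of_ne (not_lt.1 hlt) (Ne.symm heq)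
    exact min_eq_left ((one_le_div₀ (sub_pos.2 hgt)).2 hIJ)

theorem abs_sub_le_add_of_add_eq_add {hi hj bi bj : ℝ} (hhi : 0 ≤ hi) (hhj : 0 ≤ hj)
    (hH : hi + bi = hj + bj) : |bj - bi| ≤ hi + hj :=
  abs_sub_le_iff.2 ⟨by linarith, by linarith⟩

theorem limiter_well_balanced_general (hi hj bi bj d : ℝ)
    (hhi : 0 ≤ hi) (hhj : 0 ≤ hj) (α : ℝ)
    (hα : α = if bi < bj then min 1 (2 * ((hi + hj) / 2) / (bj - bi))
          else if bi = bj then 1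
          else min 1 (2 * ((hi + hj) / 2) / (bi - bj))) :
    ((hi = 0 ∧ hj = 0) → α * (bj - bi) = 0) ∧
    (hi + bi = hj + bj → α = 1) ∧
    (((hi = 0 ∧ hj = 0) ∨ hi + bi = hj + bj) →
      d * (hj - hi + α * (bj - bi)) = 0) := by
  change α = limiter ((hi + hj) / 2) ((hi + hj) / 2) bi bj at hα
  have dry : hi = 0 ∧ hj = 0 → α * (bj - bi) = 0 := by
    rintro ⟨rfl, rfl⟩
    simpa [hα] using limiter_zero_mul_sub bi bj
  have still : hi + bi = hj + bj → α = 1 := by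
    intro hH
    have hb := abs_le.1 (abs_sub_le_add_of_add_eq_add hhi hhj hH)
    exact hα ▸ limiter_eq_one (by linarith) (by linarith)
  refine ⟨dry, still, ?_⟩
  rintro (hdry | hH)
  · rw [dry hdry, hdry.1, hdry.2]
    ring
  · rw [still hH]
    linear_combination (-d) * hH

/-- Well-balancedness of the positivity-preserving limiter (Lemma 4.2):
for lake-at-rest data with zero velocity (so that `h̄_ij = h̄_ji = (hᵢ+hⱼ)/2`),
(i) `hᵢ = hⱼ = 0` implies `α_ij (bⱼ − bᵢ) = 0`, (ii) `Hᵢ = Hⱼ` implies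
`α_ij = 1`, and in either case the limited continuity flux
`d_ij (hⱼ − hᵢ + α_ij (bⱼ − bᵢ))` vanishes. -/
theorem limiter_well_balanced (hi hj bi bj d : ℝ)
    (hhi : 0 ≤ hi) (hhj : 0 ≤ hj) (hd : 0 ≤ d) (α : ℝ)
    (hα : α = if bi < bj then min 1 (2 * ((hi + hj) / 2) / (bj - bi))
          else if bi = bj then 1
          else min 1 (2 * ((hi + hj) / 2) / (bi - bj))) :
    ((hi = 0 ∧ hj = 0) → α * (bj - bi) = 0) ∧
    (hi + bi = hj + bj → α = 1) ∧
    (((hi = 0 ∧ hj = 0) ∨ hi + bi = hj + bj) →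
      d * (hj - hi + α * (bj - bi)) = 0) :=
  limiter_well_balanced_general hi hj bi bj d hhi hhj α hα
end

section
/- The scalar convex-limiting formula preserves local bounds: if h̄_ij, h̄_ji ∈ [min{h_i^min, h_j^min}, max{h_i^max, h_j^max}] with h_i^min ≤ h̄_ij ≤ h_i^max and h_j^min ≤ h̄_ji ≤ h_j^max, and f* is defined by f* = min{f, 2d·min{h_i^max − h̄_ij, h̄_ji − h_j^min}} when f ≥ 0 and f* = max{f, 2d·max{h_i^min − h̄_ij, h̄_ji − h_j^max}} when f < 0 (with d > 0), then h_i^min ≤ h̄_ij + f*/(2d) ≤ h_i^max and h_j^min ≤ h̄_ji − f*/(2d) ≤ h_j^max. -/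
/-! Writing `U = 2d·min{h_i^max − h̄_ij, h̄_ji − h_j^min} ≥ 0` and
`L = 2d·max{h_i^min − h̄_ij, h̄_ji − h_j^max} ≤ 0`, the limited flux `f*` is `f` clamped to `[L, U]`,
and `L ≤ f* ≤ U` are, after division by `2d`, exactly the four local bounds. -/

theorem ite_min_max_mem_Icc {α : Type*} [LinearOrder α] {c f L U : α} (hL : L ≤ c) (hU : c ≤ U) :
    (if c ≤ f then min f U else max f L) ∈ Set.Icc L U := by
  split_ifs with hf
  · exact ⟨le_min (hL.trans hf) (hL.trans hU), min_le_right f U⟩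
  · exact ⟨le_max_right f L, max_le ((not_le.mp hf).le.trans hU) (hL.trans hU)⟩

/-- The scalar monolithic convex limiting formula preserves the local bounds
for the flux-corrected bar states. -/
theorem mcl_local_bounds (d f himin himax hjmin hjmax hbarij hbarji : ℝ)
    (hd : 0 < d)
    (h1 : himin ≤ hbarij) (h2 : hbarij ≤ himax)
    (h3 : hjmin ≤ hbarji) (h4 : hbarji ≤ hjmax)
    (fstar : ℝ)
    (hfstar : fstar =
      if 0 ≤ f then
        min f (2 * d * min (himax - hbarij) (hbarji - hjmin))
      else
        max f (2 * d * max (himin - hbarij) (hbarji - hjmax))) :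
    himin ≤ hbarij + fstar / (2 * d) ∧ hbarij + fstar / (2 * d) ≤ himax ∧
    hjmin ≤ hbarji - fstar / (2 * d) ∧ hbarji - fstar / (2 * d) ≤ hjmax := by
  have h2d : 0 < 2 * d := by positivity
  have hL : 2 * d * max (himin - hbarij) (hbarji - hjmax) ≤ 0 :=
    mul_nonpos_of_nonneg_of_nonpos h2d.le (max_le (by linarith) (by linarith))
  have hU : 0 ≤ 2 * d * min (himax - hbarij) (hbarji - hjmin) :=
    mul_nonneg h2d.le (le_min (by linarith) (by linarith))
  obtain ⟨hlo, hhi⟩ := hfstar ▸ ite_min_max_mem_Icc hL hU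
  rw [← le_div_iff₀' h2d, max_le_iff] at hlo
  rw [← div_le_iff₀' h2d, le_min_iff] at hhi
  refine ⟨?_, ?_, ?_, ?_⟩ <;> linarith [hlo.1, hlo.2, hhi.1, hhi.2]
end

section
/- For the homogeneous 1D shallow water system with flux f(h, m) = (m, m²/h + (g/2)h²), the Lax–Friedrichs bar state ū = ((u_i + u_j)/2) − (f(u_j) − f(u_i))·c/(2d) has nonnegative first component h̄ ≥ 0 whenever d ≥ max{|v_i| + √(g h_i), |v_j| + √(g h_j)}·|c|, h_i, h_j ≥ 0, and v_k = m_k/h_k (with v_k := 0 if h_k = 0). -/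
/-!
Each momentum is bounded by the viscosity: `|m_k c| = h_k |v_k| |c| ≤ h_k d`, since the wave
speed `|v_k| + √(g h_k)` dominates `|v_k|`. Hence `(m_j - m_i) c ≤ (h_i + h_j) d`, which is the
claim after dividing by `2d`.
-/

section

variable {K : Type*} [Field K] [LinearOrder K] [IsStrictOrderedRing K]

lemma abs_mul_le_of_add_mul_le {v s c d : K} (hs : 0 ≤ s) (h : (|v| + s) * |c| ≤ d) :
    |v| * |c| ≤ d :=
  (mul_le_mul_of_nonneg_right (le_add_of_nonneg_right hs) (abs_nonneg c)).trans h

lemma abs_mul_mul_le_mul {h v c d : K} (hh : 0 ≤ h) (hv : |v| * |c| ≤ d) :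
    |h * v * c| ≤ h * d := by
  rw [abs_mul, abs_mul, abs_of_nonneg hh, mul_assoc]
  exact mul_le_mul_of_nonneg_left hv hh

lemma sub_mul_le_add_mul_of_abs_mul_le {hi hj vi vj c d : K} (hhi : 0 ≤ hi) (hhj : 0 ≤ hj)
    (hvi : |vi| * |c| ≤ d) (hvj : |vj| * |c| ≤ d) :
    (hj * vj - hi * vi) * c ≤ (hi + hj) * d :=
  calc (hj * vj - hi * vi) * c = hj * vj * c - hi * vi * c := sub_mul _ _ _
    _ ≤ |hj * vj * c| + |hi * vi * c| := (le_abs_self _).trans (abs_sub _ _)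
    _ ≤ hj * d + hi * d := add_le_add (abs_mul_mul_le_mul hhj hvj) (abs_mul_mul_le_mul hhi hvi)
    _ = (hi + hj) * d := by ring

end

theorem lf_bar_state_height_nonneg_general (g hi hj vi vj c d : ℝ)
    (hhi : 0 ≤ hi) (hhj : 0 ≤ hj)
    (mi mj : ℝ) (hmi : mi = hi * vi) (hmj : mj = hj * vj)
    (hlam : max (|vi| + Real.sqrt (g * hi)) (|vj| + Real.sqrt (g * hj)) *
      |c| ≤ d) :
    0 ≤ (hi + hj) / 2 - (mj - mi) * c / (2 * d) := by
  have hvi : |vi| * |c| ≤ d := abs_mul_le_of_add_mul_le (Real.sqrt_nonneg _)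
    ((mul_le_mul_of_nonneg_right (le_max_left _ _) (abs_nonneg c)).trans hlam)
  have hvj : |vj| * |c| ≤ d := abs_mul_le_of_add_mul_le (Real.sqrt_nonneg _)
    ((mul_le_mul_of_nonneg_right (le_max_right _ _) (abs_nonneg c)).trans hlam)
  have hd : 0 ≤ d := (mul_nonneg (abs_nonneg vi) (abs_nonneg c)).trans hvi
  have hflux : (mj - mi) * c ≤ (hi + hj) / 2 * (2 * d) := by
    subst hmi hmj
    linarith [sub_mul_le_add_mul_of_abs_mul_le hhi hhj hvi hvj]
  exact sub_nonneg.mpr (div_le_of_le_mul₀ (by positivity) (by positivity) hflux)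

/-- Nonnegativity of the first component of the Lax–Friedrichs bar state for
the 1D shallow water equations, provided the graph viscosity `d` dominates
the maximal wave speed times `|c|`. -/
theorem lf_bar_state_height_nonneg (g hi hj vi vj c d : ℝ)
    (hg : 0 < g) (hhi : 0 ≤ hi) (hhj : 0 ≤ hj) (hd : 0 < d)
    (mi mj : ℝ) (hmi : mi = hi * vi) (hmj : mj = hj * vj)
    (hlam : max (|vi| + Real.sqrt (g * hi)) (|vj| + Real.sqrt (g * hj)) *
      |c| ≤ d) :
    0 ≤ (hi + hj) / 2 - (mj - mi) * c / (2 * d) :=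
  lf_bar_state_height_nonneg_general g hi hj vi vj c d hhi hhj mi mj hmi hmj hlam
end

section
/- For a lake-at-rest configuration satisfying the discrete well-balancedness condition (for every edge either h_i = h_j = 0 or H_i = H_j) with zero discharge, both the limited continuity flux d_ij(h_j − h_i + α_ij(b_j − b_i)) − ((hv)_j − (hv)_i)c_ij and the limited momentum edge term d_ij((hv)_j − (hv)_i + ((v_i+v_j)/2)α_ij(b_j−b_i)) − (f_j^{hv} − f_i^{hv})c_ij − g((h_i+h_j)/2)α_ij(b_j−b_i)c_ij vanish, so the full low-order semi-discretization has zero right-hand side and the lake at rest is a discrete steady state. -/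
/-!
On a lake at rest the limited bathymetry jump equals the height jump: `α_ij (b_j - b_i) = h_i - h_j`.
On a dry edge both sides vanish, since the limiter is zero there unless `b_i = b_j`; on a wet edge
`|b_j - b_i| = |h_i - h_j| ≤ h_i + h_j`, so the limiter is inactive. Substituting this identity,
the continuity flux cancels, and the momentum term reduces to `(g/2) c (h_i² - h_j²) - (g/2) c (h_i² - h_j²)`.
-/

/-- The bathymetry limiter `α_ij`, with `hbar` standing for `h̄_ij = h̄_ji`. -/
noncomputable def bathymetryLimiter (hbar bi bj : ℝ) : ℝ :=
  if bi < bj then min 1 (2 * hbar / (bj - bi))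
  else if bi = bj then 1
  else min 1 (2 * hbar / (bi - bj))

theorem bathymetryLimiter_zero_mul_sub (bi bj : ℝ) :
    bathymetryLimiter 0 bi bj * (bj - bi) = 0 := by
  unfold bathymetryLimiter
  split_ifs with hlt heq
  · simp
  · simp [heq]
  · simp

theorem bathymetryLimiter_eq_one_of_abs_sub_le {hbar bi bj : ℝ} (h : |bj - bi| ≤ 2 * hbar) :
    bathymetryLimiter hbar bi bj = 1 := by
  unfold bathymetryLimiter
  split_ifs with hlt heq
  · have hpos : 0 < bj - bi := sub_pos.mpr hlt
    rw [abs_of_pos hpos] at h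
    exact min_eq_left ((one_le_div hpos).mpr h)
  · rfl
  · have hpos : 0 < bi - bj := sub_pos.mpr (lt_of_le_of_ne (not_lt.mp hlt) (Ne.symm heq))
    rw [abs_sub_comm, abs_of_pos hpos] at h
    exact min_eq_left ((one_le_div hpos).mpr h)

theorem bathymetryLimiter_mul_sub_of_lake_at_rest {hi hj bi bj : ℝ} (hhi : 0 ≤ hi) (hhj : 0 ≤ hj)
    (hwb : (hi = 0 ∧ hj = 0) ∨ hi + bi = hj + bj) :
    bathymetryLimiter ((hi + hj) / 2) bi bj * (bj - bi) = hi - hj := by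
  rcases hwb with ⟨rfl, rfl⟩ | hH
  · simpa using bathymetryLimiter_zero_mul_sub bi bj
  · have hjump : bj - bi = hi - hj := by linarith
    have hlim : |bj - bi| ≤ 2 * ((hi + hj) / 2) := by
      rw [hjump, abs_sub_le_iff]
      constructor <;> linarith
    rw [bathymetryLimiter_eq_one_of_abs_sub_le hlim, one_mul, hjump]

theorem low_order_well_balanced_general (g hi hj bi bj c d : ℝ)
    (hhi : 0 ≤ hi) (hhj : 0 ≤ hj)
    (vi vj mi mj : ℝ) (hvi : vi = 0) (hvj : vj = 0)
    (hmi : mi = 0) (hmj : mj = 0)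
    (hwb : (hi = 0 ∧ hj = 0) ∨ hi + bi = hj + bj)
    (α : ℝ)
    (hα : α = if bi < bj then min 1 (2 * ((hi + hj) / 2) / (bj - bi))
          else if bi = bj then 1
          else min 1 (2 * ((hi + hj) / 2) / (bi - bj))) :
    d * (hj - hi + α * (bj - bi)) - (mj - mi) * c = 0 ∧
    d * (mj - mi + ((vi + vj) / 2) * α * (bj - bi)) -
      ((g / 2) * hj ^ 2 - (g / 2) * hi ^ 2) * c -
      g * ((hi + hj) / 2) * α * (bj - bi) * c = 0 := by
  subst hvi hvj hmi hmj
  have key : α * (bj - bi) = hi - hj := hα ▸ bathymetryLimiter_mul_sub_of_lake_at_rest hhi hhj hwb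
  constructor
  · linear_combination d * key
  · linear_combination (-g * ((hi + hj) / 2) * c) * key

/-- Full well-balancedness of the low-order scheme: for a lake-at-rest
configuration (zero discharge, and on each edge either both heights vanish
or the free surface elevations coincide), both the limited continuity flux
and the limited momentum edge term vanish, so the lake at rest is a discrete
steady state. -/
theorem low_order_well_balanced (g hi hj bi bj c d : ℝ)
    (hg : 0 < g) (hhi : 0 ≤ hi) (hhj : 0 ≤ hj) (hd : 0 ≤ d)
    (vi vj mi mj : ℝ) (hvi : vi = 0) (hvj : vj = 0)
    (hmi : mi = 0) (hmj : mj = 0)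
    (hwb : (hi = 0 ∧ hj = 0) ∨ hi + bi = hj + bj)
    (α : ℝ)
    (hα : α = if bi < bj then min 1 (2 * ((hi + hj) / 2) / (bj - bi))
          else if bi = bj then 1
          else min 1 (2 * ((hi + hj) / 2) / (bi - bj))) :
    d * (hj - hi + α * (bj - bi)) - (mj - mi) * c = 0 ∧
    d * (mj - mi + ((vi + vj) / 2) * α * (bj - bi)) -
      ((g / 2) * hj ^ 2 - (g / 2) * hi ^ 2) * c -
      g * ((hi + hj) / 2) * α * (bj - bi) * c = 0 :=
  low_order_well_balanced_general g hi hj bi bj c d hhi hhj vi vj mi mj hvi hvj hmi hmj hwb α hα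
end
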